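/- Let q₁ and q₂ be unimodular functions on the unit circle. Then the closure of the subspace q₁H₂⁻ + q₂H₂⁻ equals all of L² if and only if q₁/q₂ is NOT a quotient of two inner functions, i.e., there do not exist inner functions φ and ψ such that q₁·ψ = q₂·φ almost everywhere on 𝕋. -/

import Mathlib

open MeasureTheory Complex Real Filter ComplexConjugate

noncomputable section

instance : Fact (0 < 2 * Real.pi) := ⟨by positivity⟩

/-- The unit circle, realized as `ℝ / 2πℤ`. -/
abbrev UC := AddCircle (2 * Real.pi)

/-- Normalized arc-length (Haar probability) measure on the circle. -/
abbrev μc : Measure UC := AddCircle.haarAddCircle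

/-- The Lebesgue space L² of the circle. -/
abbrev L2 := Lp ℂ 2 μc

/-- The Hardy space H² viewed inside L²: vanishing negative Fourier coefficients. -/
def H2set : Set L2 := {f | ∀ n : ℤ, n < 0 → fourierCoeff (⇑f) n = 0}

/-- The space H₂⁻: vanishing positive Fourier coefficients. -/
def H2negSet : Set L2 := {f | ∀ n : ℤ, 0 < n → fourierCoeff (⇑f) n = 0}

/-- The orthogonal complement H²^⊥ of H² in L²: vanishing coefficients for n ≥ 0. -/
def HperpSet : Set L2 := {f | ∀ n : ℤ, 0 ≤ n → fourierCoeff (⇑f) n = 0}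

/-- A function belongs to the Hardy space H²: square-integrable with vanishing
negative Fourier coefficients. -/
def MemH2 (f : UC → ℂ) : Prop :=
  MemLp f 2 μc ∧ ∀ n : ℤ, n < 0 → fourierCoeff f n = 0

/-- A unimodular function on the circle. -/
def Unimodular (q : UC → ℂ) : Prop :=
  AEStronglyMeasurable q μc ∧ ∀ᵐ x ∂μc, ‖q x‖ = 1

/-- An inner function: member of H² with unit modulus a.e. on the circle. -/
def IsInner (φ : UC → ℂ) : Prop :=
  MemH2 φ ∧ ∀ᵐ x ∂μc, ‖φ x‖ = 1

/-- The backward shift U⋆, acting on boundary functions: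
`(U⋆ f)(z) = (f(z) - f̂(0))/z`. -/
def bwShift (f : UC → ℂ) : UC → ℂ :=
  fun x => fourier (-1) x * (f x - fourierCoeff f 0)

/-- `f ∈ H²` is cyclic for the backward shift: the closed linear span of the
backward-shift orbit `{U⋆ⁿ f : n ≥ 0}` is all of H². -/
def CyclicBw (f : UC → ℂ) : Prop :=
  closure ((Submodule.span ℂ {u : L2 | ∃ n : ℕ, ⇑u =ᵐ[μc] bwShift^[n] f} : Submodule ℂ L2) : Set L2)
    = H2set

/-- The subspace qH₂⁻ = {q·h : h ∈ H₂⁻} of L². -/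
def qH2neg (q : UC → ℂ) : Set L2 :=
  {u | ∃ h : L2, h ∈ H2negSet ∧ ⇑u =ᵐ[μc] fun x => q x * (⇑h) x}

/-!
Multiplication by a unimodular `q` is an isometry of `L²`, and `θ ⊥ qH₂⁻` exactly when `q̄θ`
has vanishing Fourier coefficients of index `≤ 0`. So if `q₁ψ = q₂φ` with `φ, ψ` inner, the
nonzero function `zq₁ψ = zq₂φ` is orthogonal to `q₁H₂⁻ + q₂H₂⁻`.

Conversely `M = (q₁H₂⁻ + q₂H₂⁻)^⊥` is invariant under multiplication by `z`. If `zM = M`, then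
`q̄₁θ` has no nonzero Fourier coefficient for `θ ∈ M`, so `M = 0`. Otherwise some `θ ≠ 0` in
`M ⊖ zM` is orthogonal to all `zᵏθ`, `k ≥ 1`, so `|θ|²` is constant; then `z̄q̄₁θ / ‖θ‖` and
`z̄q̄₂θ / ‖θ‖` are inner functions `ψ`, `φ` with `q₁ψ = z̄θ / ‖θ‖ = q₂φ`.
-/

open Topology

local notation "⟪" x ", " y "⟫" => @inner ℂ _ _ x y

lemma norm_fourier_apply (n : ℤ) (x : UC) : ‖fourier n x‖ = 1 := Circle.norm_coe _

lemma fourierCoeff_fourier_mul (g : UC → ℂ) (m k : ℤ) :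
    fourierCoeff (fun x => fourier m x * g x) k = fourierCoeff g (k - m) := by
  refine integral_congr_ae (Eventually.of_forall fun x => ?_)
  simp only [smul_eq_mul, ← mul_assoc, ← fourier_add]
  ring_nf

lemma fourierCoeff_const (c : ℂ) : fourierCoeff (fun _ : UC => c) = Pi.single 0 c := by
  have hc : (fun _ : UC => c) = c • ⇑(fourier 0 : C(UC, ℂ)) := by
    ext x
    simp
  ext k
  rw [hc, fourierCoeff.const_smul, fourierCoeff_fourier]
  by_cases hk : k = 0
  · subst hk
    simp
  · simp [Pi.single_eq_of_ne hk]

lemma inner_eq_integral (f g : L2) : ⟪f, g⟫ = ∫ x, conj (f x) * g x ∂μc := by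
  simp only [MeasureTheory.L2.inner_def, RCLike.inner_apply, mul_comm]

lemma fourierCoeff_eq_inner (f : L2) (n : ℤ) : fourierCoeff f n = ⟪fourierLp 2 n, f⟫ := by
  rw [← fourierBasis_repr, HilbertBasis.repr_apply_apply, coe_fourierBasis]

lemma inner_eq_zero_of_fourierCoeff (f g : L2) (hf : ∀ n, 0 < n → fourierCoeff f n = 0)
    (hg : ∀ n ≤ 0, fourierCoeff g n = 0) : ⟪f, g⟫ = 0 := by
  rw [← fourierBasis.tsum_inner_mul_inner f g]
  refine (tsum_congr fun n => ?_).trans tsum_zero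
  rw [coe_fourierBasis, ← inner_conj_symm, ← fourierCoeff_eq_inner, ← fourierCoeff_eq_inner]
  rcases le_or_gt n 0 with hn | hn
  · rw [hg n hn, mul_zero]
  · rw [hf n hn, map_zero, zero_mul]

lemma integrable_continuousMap_mul {w : UC → ℂ} (hw : Integrable w μc) (g : C(UC, ℂ)) :
    Integrable (fun x => g x * w x) μc :=
  hw.bdd_mul g.continuous.aestronglyMeasurable (Eventually.of_forall g.norm_coe_le_norm)

def integralMulCLM {w : UC → ℂ} (hw : Integrable w μc) : C(UC, ℂ) →L[ℂ] ℂ :=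
  LinearMap.mkContinuous
    { toFun := fun g => ∫ x, g x * w x ∂μc
      map_add' := fun f g => by
        simp only [ContinuousMap.add_apply, add_mul]
        exact integral_add (integrable_continuousMap_mul hw f)
          (integrable_continuousMap_mul hw g)
      map_smul' := fun c g => by
        simp only [ContinuousMap.smul_apply, smul_eq_mul, mul_assoc, RingHom.id_apply]
        exact integral_const_mul c _ }
    (∫ x, ‖w x‖ ∂μc) fun g => by
      refine (norm_integral_le_of_norm_le (hw.norm.mul_const ‖g‖)
        (Eventually.of_forall fun x => ?_)).trans_eq (integral_mul_const _ _)
      rw [norm_mul, mul_comm]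
      exact mul_le_mul_of_nonneg_left (g.norm_coe_le_norm x) (norm_nonneg _)

lemma integral_continuousMap_mul_eq_zero {w : UC → ℂ} (hw : Integrable w μc)
    (h : ∀ n, fourierCoeff w n = 0) (g : C(UC, ℂ)) : ∫ x, g x * w x ∂μc = 0 := by
  have hspan : Submodule.span ℂ (Set.range fourier) ≤ (integralMulCLM hw).ker := by
    refine Submodule.span_le.2 (Set.range_subset_iff.2 fun m => ?_)
    simpa [integralMulCLM, fourierCoeff] using h (-m)
  have hclosure := Submodule.topologicalClosure_minimal _ hspan (integralMulCLM hw).isClosed_ker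
  rw [span_fourier_closure_eq_top] at hclosure
  exact hclosure Submodule.mem_top

lemma ae_eq_zero_of_fourierCoeff_eq_zero {w : UC → ℂ} (hw : Integrable w μc)
    (h : ∀ n, fourierCoeff w n = 0) : w =ᵐ[μc] 0 := by
  refine ae_eq_zero_of_forall_setIntegral_isClosed_eq_zero hw fun s hs => ?_
  have hδ (n : ℕ) : (0 : ℝ) < 1 / (n + 1) := Nat.one_div_pos_of_nat
  have hind := tendsto_pi_nhds.1 <|
    thickenedIndicator_tendsto_indicator_closure hδ tendsto_one_div_add_atTop_nhds_zero_nat s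
  let g (n : ℕ) : C(UC, ℂ) :=
    ⟨fun x => (thickenedIndicator (hδ n) s x : ℂ), by fun_prop⟩
  have hlim : Tendsto (fun n => ∫ x, g n x * w x ∂μc) atTop (𝓝 (∫ x in s, w x ∂μc)) := by
    rw [← integral_indicator hs.measurableSet]
    refine tendsto_integral_of_dominated_convergence (‖w ·‖)
      (fun n => (integrable_continuousMap_mul hw (g n)).aestronglyMeasurable) hw.norm
      (fun n => Eventually.of_forall fun x => ?_) (Eventually.of_forall fun x => ?_)
    · rw [norm_mul]
      refine mul_le_of_le_one_left (norm_nonneg _) ?_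
      simpa [g] using thickenedIndicator_le_one (hδ n) s x
    · have hx := (((continuous_ofReal.comp NNReal.continuous_coe).tendsto _).comp
        (hind x)).mul_const (w x)
      rw [hs.closure_eq] at hx
      convert hx using 1
      congr 1
      by_cases hxs : x ∈ s <;> simp [hxs]
  exact tendsto_nhds_unique hlim
    (by simp only [integral_continuousMap_mul_eq_zero hw h, tendsto_const_nhds])

lemma Unimodular.conj {q : UC → ℂ} (hq : Unimodular q) : Unimodular fun x => conj (q x) :=
  ⟨continuous_conj.comp_aestronglyMeasurable hq.1, hq.2.mono fun x hx => by simpa using hx⟩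

lemma Unimodular.conj_mul_self {q : UC → ℂ} (hq : Unimodular q) :
    ∀ᵐ x ∂μc, conj (q x) * q x = 1 := by
  filter_upwards [hq.2] with x hx
  rw [Complex.conj_mul', hx, ofReal_one, one_pow]

lemma unimodular_fourier (n : ℤ) : Unimodular (fourier n) :=
  ⟨(fourier n).continuous.aestronglyMeasurable, Eventually.of_forall (norm_fourier_apply n)⟩

lemma Unimodular.memLp_mul {q : UC → ℂ} (hq : Unimodular q) (f : L2) :
    MemLp (fun x => q x * f x) 2 μc :=
  (Lp.memLp f).of_le (hq.1.mul (Lp.aestronglyMeasurable f)) <| by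
    filter_upwards [hq.2] with x hx
    rw [norm_mul, hx, one_mul]

def mulUnimodular (q : UC → ℂ) (hq : Unimodular q) : L2 →ₗᵢ[ℂ] L2 where
  toFun f := (hq.memLp_mul f).toLp _
  map_add' f g := by
    refine Lp.ext ?_
    filter_upwards [(hq.memLp_mul (f + g)).coeFn_toLp, (hq.memLp_mul f).coeFn_toLp,
      (hq.memLp_mul g).coeFn_toLp, Lp.coeFn_add f g,
      Lp.coeFn_add ((hq.memLp_mul f).toLp _) ((hq.memLp_mul g).toLp _)] with x h h₁ h₂ hfg hsum
    simp only [h, hsum, Pi.add_apply, h₁, h₂, hfg, mul_add]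
  map_smul' c f := by
    refine Lp.ext ?_
    filter_upwards [(hq.memLp_mul (c • f)).coeFn_toLp, (hq.memLp_mul f).coeFn_toLp,
      Lp.coeFn_smul c f, Lp.coeFn_smul c ((hq.memLp_mul f).toLp _)] with x h h₁ hcf hsmul
    simp only [h, hsmul, Pi.smul_apply, h₁, hcf, smul_eq_mul, RingHom.id_apply]
    ring
  norm_map' f := by
    simp only [LinearMap.coe_mk, AddHom.coe_mk, Lp.norm_toLp]
    rw [Lp.norm_def]
    refine congrArg ENNReal.toReal (eLpNorm_congr_norm_ae ?_)
    filter_upwards [hq.2] with x hx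
    rw [norm_mul, hx, one_mul]

lemma coeFn_mulUnimodular {q : UC → ℂ} (hq : Unimodular q) (f : L2) :
    mulUnimodular q hq f =ᵐ[μc] fun x => q x * f x :=
  (hq.memLp_mul f).coeFn_toLp

lemma inner_mulUnimodular_left {q : UC → ℂ} (hq : Unimodular q) (f g : L2) :
    ⟪mulUnimodular q hq f, g⟫ = ⟪f, mulUnimodular _ hq.conj g⟫ := by
  rw [inner_eq_integral, inner_eq_integral]
  refine integral_congr_ae ?_
  filter_upwards [coeFn_mulUnimodular hq f, coeFn_mulUnimodular hq.conj g] with x hf hg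
  rw [hf, hg, map_mul]
  ring

abbrev shift (n : ℤ) : L2 →ₗᵢ[ℂ] L2 := mulUnimodular _ (unimodular_fourier n)

lemma shift_shift (a b : ℤ) (f : L2) : shift a (shift b f) = shift (a + b) f := by
  refine Lp.ext ?_
  filter_upwards [coeFn_mulUnimodular (unimodular_fourier a) (shift b f),
    coeFn_mulUnimodular (unimodular_fourier b) f,
    coeFn_mulUnimodular (unimodular_fourier (a + b)) f] with x h₁ h₂ h₃
  rw [h₁, h₂, h₃, fourier_add, mul_assoc]

lemma shift_zero (f : L2) : shift 0 f = f := by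
  refine Lp.ext ?_
  filter_upwards [coeFn_mulUnimodular (unimodular_fourier 0) f] with x h
  rw [h, fourier_zero, one_mul]

def H2neg : Submodule ℂ L2 where
  carrier := H2negSet
  zero_mem' n _ := by rw [fourierCoeff_eq_inner, inner_zero_right]
  add_mem' hf hg n hn := by
    rw [fourierCoeff_eq_inner, inner_add_right, ← fourierCoeff_eq_inner, ← fourierCoeff_eq_inner,
      hf n hn, hg n hn, add_zero]
  smul_mem' c f hf n hn := by
    rw [fourierCoeff_eq_inner, inner_smul_right, ← fourierCoeff_eq_inner, hf n hn, mul_zero]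

lemma fourierLp_mem_H2neg {n : ℤ} (hn : n ≤ 0) : fourierLp 2 n ∈ H2neg := fun m hm => by
  rw [fourierCoeff_congr_ae (coeFn_fourierLp 2 n), fourierCoeff_fourier,
    Pi.single_eq_of_ne (by omega)]

lemma mem_orthogonal_H2neg_iff (g : L2) : g ∈ H2negᗮ ↔ ∀ n ≤ 0, fourierCoeff g n = 0 := by
  refine ⟨fun hg n hn => ?_, fun hg f hf => inner_eq_zero_of_fourierCoeff f g hf hg⟩
  rw [fourierCoeff_eq_inner]
  exact Submodule.inner_right_of_mem_orthogonal (fourierLp_mem_H2neg hn) hg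

def qH2negSubmodule (q : UC → ℂ) (hq : Unimodular q) : Submodule ℂ L2 :=
  H2neg.map (mulUnimodular q hq).toLinearMap

lemma coe_qH2negSubmodule {q : UC → ℂ} (hq : Unimodular q) :
    (qH2negSubmodule q hq : Set L2) = qH2neg q := by
  ext u
  constructor
  · rintro ⟨h, hh, rfl⟩
    exact ⟨h, hh, coeFn_mulUnimodular hq h⟩
  · rintro ⟨h, hh, hu⟩
    exact ⟨h, hh, Lp.ext ((coeFn_mulUnimodular hq h).trans hu.symm)⟩

lemma mem_orthogonal_qH2negSubmodule_iff {q : UC → ℂ} (hq : Unimodular q) (θ : L2) :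
    θ ∈ (qH2negSubmodule q hq)ᗮ ↔ ∀ n ≤ 0, fourierCoeff (fun x => conj (q x) * θ x) n = 0 := by
  rw [← fourierCoeff_congr_ae (coeFn_mulUnimodular hq.conj θ), ← mem_orthogonal_H2neg_iff]
  simp only [Submodule.mem_orthogonal, qH2negSubmodule, Submodule.mem_map, forall_exists_index,
    and_imp, forall_apply_eq_imp_iff₂, LinearIsometry.coe_toLinearMap, inner_mulUnimodular_left]

lemma fourierCoeff_conj_mul_shift (q : UC → ℂ) (θ : L2) (k n : ℤ) :
    fourierCoeff (fun x => conj (q x) * shift k θ x) n =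
      fourierCoeff (fun x => conj (q x) * θ x) (n - k) := by
  rw [← fourierCoeff_fourier_mul]
  refine congrFun (fourierCoeff_congr_ae ?_) n
  filter_upwards [coeFn_mulUnimodular (unimodular_fourier k) θ] with x hx
  rw [hx]
  ring

lemma shift_mem_orthogonal_qH2negSubmodule {q : UC → ℂ} (hq : Unimodular q) {θ : L2}
    (hθ : θ ∈ (qH2negSubmodule q hq)ᗮ) {k : ℤ} (hk : 0 ≤ k) :
    shift k θ ∈ (qH2negSubmodule q hq)ᗮ := by
  rw [mem_orthogonal_qH2negSubmodule_iff] at hθ ⊢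
  intro n hn
  rw [fourierCoeff_conj_mul_shift]
  exact hθ _ (by omega)

lemma eq_bot_of_shift_neg_one_mem {q : UC → ℂ} (hq : Unimodular q) {M : Submodule ℂ L2}
    (hM : M ≤ (qH2negSubmodule q hq)ᗮ) (hinv : ∀ θ ∈ M, shift (-1) θ ∈ M) : M = ⊥ := by
  have hcoeff (k : ℕ) : ∀ θ ∈ M, ∀ n ≤ (k : ℤ), fourierCoeff (fun x => conj (q x) * θ x) n = 0 := by
    induction k with
    | zero => exact fun θ hθ => (mem_orthogonal_qH2negSubmodule_iff hq θ).1 (hM hθ)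
    | succ k ih =>
      intro θ hθ n hn
      simpa [fourierCoeff_conj_mul_shift] using ih _ (hinv θ hθ) (n - 1) (by omega)
  refine (Submodule.eq_bot_iff M).2 fun θ hθ => ?_
  have hzero : (fun x => conj (q x) * θ x) =ᵐ[μc] 0 :=
    ae_eq_zero_of_fourierCoeff_eq_zero ((hq.conj.memLp_mul θ).integrable one_le_two)
      fun n => hcoeff n.toNat θ hθ n (Int.self_le_toNat n)
  refine Lp.eq_zero_iff_ae_eq_zero.2 ?_
  filter_upwards [hzero, hq.2] with x hx hqx
  have hq0 : conj (q x) ≠ 0 := by simp [← norm_ne_zero_iff, hqx]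
  exact (mul_eq_zero.1 hx).resolve_left hq0

theorem Submodule.exists_mem_orthogonal_ne_zero_of_lt {𝕜 E : Type*} [RCLike 𝕜]
    [NormedAddCommGroup E] [InnerProductSpace 𝕜 E] {N M : Submodule 𝕜 E}
    [N.HasOrthogonalProjection] (h : N < M) : ∃ θ ∈ M, θ ∈ Nᗮ ∧ θ ≠ 0 := by
  by_contra! H
  have hbot : Nᗮ ⊓ M = ⊥ := (Submodule.eq_bot_iff _).2 fun θ hθ => H θ hθ.2 hθ.1
  have hsup := Submodule.sup_orthogonal_inf_of_hasOrthogonalProjection h.le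
  rw [hbot, sup_bot_eq] at hsup
  exact h.ne hsup

/-- Wold's argument: if `M ⊖ zM` were zero, `M` would also be `z⁻¹`-invariant, hence zero. -/
lemma exists_wandering_vector {q : UC → ℂ} (hq : Unimodular q) {M : Submodule ℂ L2}
    [CompleteSpace M] (hM : M ≤ (qH2negSubmodule q hq)ᗮ)
    (hinv : ∀ θ ∈ M, ∀ k, 0 ≤ k → shift k θ ∈ M) (hne : M ≠ ⊥) :
    ∃ θ ∈ M, θ ≠ 0 ∧ ∀ k, 0 < k → ⟪θ, shift k θ⟫ = 0 := by
  set N := M.map (shift 1).toLinearMap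
  have hNM : N ≤ M := by
    rintro _ ⟨θ, hθ, rfl⟩
    exact hinv θ hθ 1 zero_le_one
  have hMN : N ≠ M := by
    refine fun hNM => hne (eq_bot_of_shift_neg_one_mem hq hM fun θ hθ => ?_)
    obtain ⟨θ', hθ', rfl⟩ := hNM ▸ hθ
    simpa [shift_shift, shift_zero] using hθ'
  have : CompleteSpace N := LinearIsometry.completeSpace_map (shift 1) M
  obtain ⟨θ, hθM, hθN, hθ0⟩ := Submodule.exists_mem_orthogonal_ne_zero_of_lt (hNM.lt_of_ne hMN)
  refine ⟨θ, hθM, hθ0, fun k hk => Submodule.inner_left_of_mem_orthogonal ?_ hθN⟩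
  refine ⟨shift (k - 1) θ, hinv θ hθM _ (by omega), ?_⟩
  simp [shift_shift]

lemma fourierCoeff_norm_sq (θ : L2) (k : ℤ) :
    fourierCoeff (fun x => (‖θ x‖ : ℂ) ^ 2) k = ⟪θ, shift (-k) θ⟫ := by
  rw [inner_eq_integral]
  refine integral_congr_ae ?_
  filter_upwards [coeFn_mulUnimodular (unimodular_fourier (-k)) θ] with x hx
  rw [hx, smul_eq_mul, ← Complex.conj_mul']
  ring

lemma norm_ae_eq_norm_of_inner_shift_eq_zero (θ : L2)
    (h : ∀ k, 0 < k → ⟪θ, shift k θ⟫ = 0) : ∀ᵐ x ∂μc, ‖θ x‖ = ‖θ‖ := by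
  have hint : Integrable (fun x => (‖θ x‖ : ℂ) ^ 2) μc := by
    simpa using L2.integrable_inner (𝕜 := ℂ) θ θ
  have hinner (k : ℤ) (hk : k ≠ 0) : ⟪θ, shift (-k) θ⟫ = 0 := by
    rcases hk.lt_or_gt with hk | hk
    · exact h _ (by omega)
    · rw [← (shift k).inner_map_map, shift_shift, add_neg_cancel, shift_zero, ← inner_conj_symm,
        h k hk, map_zero]
  set c : ℂ := (‖θ‖ : ℂ) ^ 2
  have hsplit : ((fun x => (‖θ x‖ : ℂ) ^ 2) - fun _ => c) =
      (fun x => (‖θ x‖ : ℂ) ^ 2) + fun _ => -c := by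
    ext x
    simp [sub_eq_add_neg]
  have hconst := ae_eq_zero_of_fourierCoeff_eq_zero (hint.sub (integrable_const c)) fun k => by
    rw [hsplit, fourierCoeff.add hint (integrable_const _), Pi.add_apply, fourierCoeff_const,
      fourierCoeff_norm_sq]
    by_cases hk : k = 0
    · simp [hk, shift_zero, c, inner_self_eq_norm_sq_to_K]
    · simp [hk, hinner k hk]
  filter_upwards [hconst] with x hx
  have hsq : (‖θ x‖ : ℂ) ^ 2 = (‖θ‖ : ℂ) ^ 2 := sub_eq_zero.1 hx
  exact (pow_left_inj₀ (norm_nonneg _) (norm_nonneg _) two_ne_zero).1 (by exact_mod_cast hsq)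

lemma isInner_of_norm_eq_one {φ : UC → ℂ} (hφ : AEStronglyMeasurable φ μc)
    (hnorm : ∀ᵐ x ∂μc, ‖φ x‖ = 1) (hcoeff : ∀ n < 0, fourierCoeff φ n = 0) : IsInner φ :=
  ⟨⟨MemLp.of_bound hφ 1 (hnorm.mono fun _ hx => hx.le), hcoeff⟩, hnorm⟩

lemma isInner_of_mem_orthogonal {q : UC → ℂ} (hq : Unimodular q) {θ : L2}
    (hθ : θ ∈ (qH2negSubmodule q hq)ᗮ) (hmod : ∀ᵐ x ∂μc, ‖θ x‖ = ‖θ‖) (hθ0 : θ ≠ 0) :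
    IsInner fun x => (‖θ‖ : ℂ)⁻¹ * (fourier (-1) x * (conj (q x) * θ x)) := by
  refine isInner_of_norm_eq_one (((unimodular_fourier (-1)).1.mul
    (hq.conj.1.mul (Lp.aestronglyMeasurable θ))).const_mul _) ?_ fun n hn => ?_
  · filter_upwards [hmod, hq.2] with x hθx hqx
    simp only [norm_mul, norm_inv, norm_fourier_apply, Complex.norm_conj, hθx, hqx,
      Complex.norm_real, norm_norm, one_mul]
    exact inv_mul_cancel₀ (norm_ne_zero_iff.2 hθ0)
  · rw [fourierCoeff.const_mul, fourierCoeff_fourier_mul,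
      (mem_orthogonal_qH2negSubmodule_iff hq θ).1 hθ _ (by omega), mul_zero]

lemma mem_orthogonal_qH2negSubmodule_of_ae_eq {q χ : UC → ℂ} (hq : Unimodular q) (hχ : MemH2 χ)
    {θ : L2} (hθ : θ =ᵐ[μc] fun x => fourier 1 x * (q x * χ x)) :
    θ ∈ (qH2negSubmodule q hq)ᗮ := by
  rw [mem_orthogonal_qH2negSubmodule_iff]
  intro n hn
  have hθχ : (fun x => conj (q x) * θ x) =ᵐ[μc] fun x => fourier 1 x * χ x := by
    filter_upwards [hθ, hq.conj_mul_self] with x hx hqx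
    linear_combination (fourier 1 x * χ x) * hqx + conj (q x) * hx
  rw [fourierCoeff_congr_ae hθχ, fourierCoeff_fourier_mul, hχ.2 _ (by omega)]

lemma closure_sum_qH2neg_eq_univ_iff {q₁ q₂ : UC → ℂ} (h₁ : Unimodular q₁) (h₂ : Unimodular q₂) :
    closure {u : L2 | ∃ a ∈ qH2neg q₁, ∃ b ∈ qH2neg q₂, u = a + b} = Set.univ ↔
      (qH2negSubmodule q₁ h₁ ⊔ qH2negSubmodule q₂ h₂)ᗮ = ⊥ := by
  have hset : {u : L2 | ∃ a ∈ qH2neg q₁, ∃ b ∈ qH2neg q₂, u = a + b} =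
      ((qH2negSubmodule q₁ h₁ ⊔ qH2negSubmodule q₂ h₂ : Submodule ℂ L2) : Set L2) := by
    ext u
    simp only [← coe_qH2negSubmodule h₁, ← coe_qH2negSubmodule h₂, SetLike.mem_coe,
      Submodule.mem_sup, eq_comm]
    rfl
  rw [hset, ← Submodule.topologicalClosure_coe, Submodule.coe_eq_univ,
    Submodule.topologicalClosure_eq_top_iff]

lemma orthogonal_sup_ne_bot_of_inner_quotient {q₁ q₂ φ ψ : UC → ℂ} (h₁ : Unimodular q₁)
    (h₂ : Unimodular q₂) (hφ : IsInner φ) (hψ : IsInner ψ)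
    (hrel : ∀ᵐ x ∂μc, q₁ x * ψ x = q₂ x * φ x) :
    (qH2negSubmodule q₁ h₁ ⊔ qH2negSubmodule q₂ h₂)ᗮ ≠ ⊥ := by
  have hnorm : ∀ᵐ x ∂μc, ‖fourier 1 x * (q₁ x * ψ x)‖ = 1 := by
    filter_upwards [h₁.2, hψ.2] with x hqx hψx
    rw [norm_mul, norm_mul, norm_fourier_apply, hqx, hψx, one_mul, one_mul]
  have hmem : MemLp (fun x => fourier 1 x * (q₁ x * ψ x)) 2 μc :=
    MemLp.of_bound ((unimodular_fourier 1).1.mul (h₁.1.mul hψ.1.1.1)) 1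
      (hnorm.mono fun _ hx => hx.le)
  set θ := hmem.toLp _
  have hθ₂ : θ =ᵐ[μc] fun x => fourier 1 x * (q₂ x * φ x) := by
    filter_upwards [hmem.coeFn_toLp, hrel] with x hx hrelx
    rw [hx, hrelx]
  refine (Submodule.ne_bot_iff _).2 ⟨θ, ?_, fun hθ0 => ?_⟩
  · rw [← Submodule.inf_orthogonal]
    exact ⟨mem_orthogonal_qH2negSubmodule_of_ae_eq h₁ hψ.1 hmem.coeFn_toLp,
      mem_orthogonal_qH2negSubmodule_of_ae_eq h₂ hφ.1 hθ₂⟩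
  · have hfalse : ∀ᵐ x ∂μc, False := by
      filter_upwards [Lp.eq_zero_iff_ae_eq_zero.1 hθ0, hmem.coeFn_toLp, hnorm] with x h0 hx hnx
      rw [← hx, h0, Pi.zero_apply, norm_zero] at hnx
      exact zero_ne_one hnx
    exact hfalse.exists.choose_spec

lemma exists_inner_quotient_of_orthogonal_sup_ne_bot {q₁ q₂ : UC → ℂ} (h₁ : Unimodular q₁)
    (h₂ : Unimodular q₂) (hne : (qH2negSubmodule q₁ h₁ ⊔ qH2negSubmodule q₂ h₂)ᗮ ≠ ⊥) :
    ∃ φ ψ : UC → ℂ, IsInner φ ∧ IsInner ψ ∧ ∀ᵐ x ∂μc, q₁ x * ψ x = q₂ x * φ x := by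
  have hinv : ∀ θ ∈ (qH2negSubmodule q₁ h₁ ⊔ qH2negSubmodule q₂ h₂)ᗮ, ∀ k, 0 ≤ k →
      shift k θ ∈ (qH2negSubmodule q₁ h₁ ⊔ qH2negSubmodule q₂ h₂)ᗮ := by
    simp only [← Submodule.inf_orthogonal, Submodule.mem_inf]
    exact fun θ hθ k hk => ⟨shift_mem_orthogonal_qH2negSubmodule h₁ hθ.1 hk,
      shift_mem_orthogonal_qH2negSubmodule h₂ hθ.2 hk⟩
  obtain ⟨θ, hθ, hθ0, hwand⟩ := exists_wandering_vector h₁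
    (Submodule.orthogonal_le le_sup_left) hinv hne
  have hmod := norm_ae_eq_norm_of_inner_shift_eq_zero θ hwand
  rw [← Submodule.inf_orthogonal] at hθ
  refine ⟨_, _, isInner_of_mem_orthogonal h₂ hθ.2 hmod hθ0,
    isInner_of_mem_orthogonal h₁ hθ.1 hmod hθ0, ?_⟩
  filter_upwards [h₁.conj_mul_self, h₂.conj_mul_self] with x hq₁ hq₂
  linear_combination ((‖θ‖ : ℂ)⁻¹ * fourier (-1) x * θ x) * (hq₁ - hq₂)

/-- For unimodular `q₁, q₂`: the closure of `q₁H₂⁻ + q₂H₂⁻` is all of L² iff `q₁/q₂` is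
not a quotient of two inner functions. -/
theorem stmt9 (q₁ q₂ : UC → ℂ) (h₁ : Unimodular q₁) (h₂ : Unimodular q₂) :
    closure {u : L2 | ∃ a ∈ qH2neg q₁, ∃ b ∈ qH2neg q₂, u = a + b} = Set.univ
    ↔ ¬ ∃ φ ψ : UC → ℂ, IsInner φ ∧ IsInner ψ ∧
        ∀ᵐ x ∂μc, q₁ x * ψ x = q₂ x * φ x := by
  rw [closure_sum_qH2neg_eq_univ_iff h₁ h₂]
  constructor
  · rintro hbot ⟨φ, ψ, hφ, hψ, hrel⟩
    exact orthogonal_sup_ne_bot_of_inner_quotient h₁ h₂ hφ hψ hrel hbot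
  · intro hno
    by_contra hne
    exact hno (exists_inner_quotient_of_orthogonal_sup_ne_bot h₁ h₂ hne)
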